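/- Suppose p_{0k} > 0 and p_{1k} > 0 for all k. Then the topological support of the distribution of φ = Σ_{k=1}^∞ φ_k a_k (the smallest closed set of full measure) equals the set S = {Σ_{k=1}^∞ γ_k a_k : γ_k ∈ {0,1} for all k} of all subsums of the series; in particular, S is a closed subset of ℝ. -/

import Mathlib

/-!
The subsum map `γ ↦ ∑ γₖ aₖ` is continuous on the compact Cantor space `ℕ → Bool`, so its
range `S` is compact, hence closed, and carries all of the image measure. Conversely, every
nonempty open subset of `ℕ → Bool` contains a cylinder `{ω | ω k = γ k for k ∈ s}`, whose
measure `∏_{k ∈ s} p_{γ k, k}` is positive; so the product measure charges every nonempty open set, and a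
closed set `F` of full image measure has a preimage whose (open) complement is null, hence empty.
-/

open MeasureTheory

/-- The Bernoulli measure on `Bool` giving mass `p₀` to `false` (value `0`) and
mass `p₁` to `true` (value `1`). -/
noncomputable def bernoulliMeasure (p₀ p₁ : ℝ) : Measure Bool :=
  ENNReal.ofReal p₀ • Measure.dirac false + ENNReal.ofReal p₁ • Measure.dirac true

/-- `P` is the infinite product of the measures `μ k` on `Bool`: every
finite-dimensional cylinder set gets the product of the coordinate measures. -/
def IsProductMeasure (μ : ℕ → Measure Bool) (P : Measure (ℕ → Bool)) : Prop :=
  ∀ (s : Finset ℕ) (E : ℕ → Set Bool),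
    P {ω | ∀ k ∈ s, ω k ∈ E k} = ∏ k ∈ s, μ k (E k)

open Set

noncomputable def subsum (a : ℕ → ℝ) (γ : ℕ → Bool) : ℝ :=
  ∑' k, if γ k then a k else 0

theorem continuous_subsum {a : ℕ → ℝ} (ha : ∀ k, 0 ≤ a k) (hs : Summable a) :
    Continuous (subsum a) := by
  refine continuous_tsum (fun k => ?_) hs fun k γ => ?_
  · exact continuous_of_discreteTopology.comp (continuous_apply k)
      (g := fun b : Bool => if b then a k else 0)
  · cases γ k <;> simp [abs_of_nonneg (ha k), ha k]

theorem bernoulliMeasure_singleton_ne_zero {p₀ p₁ : ℝ} (h₀ : 0 < p₀) (h₁ : 0 < p₁)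
    (b : Bool) : bernoulliMeasure p₀ p₁ {b} ≠ 0 := by
  cases b <;> simp [bernoulliMeasure, h₀, h₁]

namespace IsProductMeasure

variable {μ : ℕ → Measure Bool} {P : Measure (ℕ → Bool)}

theorem isProbabilityMeasure (hP : IsProductMeasure μ P) : IsProbabilityMeasure P :=
  ⟨by simpa using hP ∅ fun _ => univ⟩

theorem isOpenPosMeasure (hP : IsProductMeasure μ P) (hμ : ∀ k b, μ k {b} ≠ 0) :
    P.IsOpenPosMeasure := by
  refine ⟨fun U hU ⟨γ, hγU⟩ => ?_⟩
  obtain ⟨s, u, hu, hsU⟩ := isOpen_pi_iff.1 hU γ hγU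
  have hcyl : {ω : ℕ → Bool | ∀ k ∈ s, ω k ∈ ({γ k} : Set Bool)} ⊆ U := fun ω hω =>
    hsU fun k hk => by simpa [Set.mem_singleton_iff.1 (hω k hk)] using (hu k hk).2
  refine ne_bot_of_le_ne_bot ?_ (measure_mono hcyl)
  rw [hP]
  exact Finset.prod_ne_zero_iff.2 fun k _ => hμ k (γ k)

end IsProductMeasure

theorem range_subset_of_map_eq_one {X Y : Type*} [TopologicalSpace X] [MeasurableSpace X]
    [OpensMeasurableSpace X] [TopologicalSpace Y] [MeasurableSpace Y] [BorelSpace Y]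
    {P : Measure X} [IsProbabilityMeasure P] [P.IsOpenPosMeasure] {f : X → Y}
    (hf : Continuous f) {F : Set Y} (hF : IsClosed F) (hPF : P.map f F = 1) : range f ⊆ F := by
  have : IsProbabilityMeasure (P.map f) := Measure.isProbabilityMeasure_map hf.aemeasurable
  have hnull : P (f ⁻¹' Fᶜ) = 0 := by
    rw [← Measure.map_apply hf.measurable hF.isOpen_compl.measurableSet]
    exact prob_compl_eq_zero_iff hF.measurableSet |>.2 hPF
  have hempty := (hF.isOpen_compl.preimage hf).measure_eq_zero_iff P |>.1 hnull
  rintro _ ⟨x, rfl⟩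
  by_contra hx
  exact hempty.subset hx

theorem distribution_support_eq_subsums_general
    (a : ℕ → ℝ) (ha : ∀ k, 0 < a k) (hsum : ∑' k, a k = 1)
    (p₀ p₁ : ℕ → ℝ) (h₀ : ∀ k, 0 < p₀ k) (h₁ : ∀ k, 0 < p₁ k)
    (P : Measure (ℕ → Bool))
    (hP : IsProductMeasure (fun k => bernoulliMeasure (p₀ k) (p₁ k)) P)
    (μφ : Measure ℝ)
    (hμφ : μφ = Measure.map (fun ω : ℕ → Bool => ∑' k : ℕ, if ω k then a k else 0) P)
    (S : Set ℝ)
    (hS : S = {x | ∃ γ : ℕ → Bool, x = ∑' k : ℕ, if γ k then a k else 0}) :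
    IsClosed S ∧ μφ S = 1 ∧ ∀ F : Set ℝ, IsClosed F → μφ F = 1 → S ⊆ F := by
  have hsummable : Summable a := by
    by_contra h
    rw [tsum_eq_zero_of_not_summable h] at hsum
    exact zero_ne_one hsum
  have hcont : Continuous (subsum a) := continuous_subsum (fun k => (ha k).le) hsummable
  have hSrange : S = range (subsum a) := hS.trans <| ext fun _ => exists_congr fun _ => eq_comm
  have := hP.isProbabilityMeasure
  have := hP.isOpenPosMeasure fun k => bernoulliMeasure_singleton_ne_zero (h₀ k) (h₁ k)
  change μφ = P.map (subsum a) at hμφ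
  subst hSrange hμφ
  refine ⟨(isCompact_range hcont).isClosed, ?_, fun F hF => range_subset_of_map_eq_one hcont hF⟩
  rw [Measure.map_apply hcont.measurable (isCompact_range hcont).isClosed.measurableSet,
    preimage_range, measure_univ]

/-- If `p₀ₖ > 0` and `p₁ₖ > 0` for all `k`, then the topological support of the
distribution of `φ = ∑ φₖ aₖ` — the smallest closed set of full measure — equals the
set `S` of all subsums of the series `∑ aₖ`; in particular `S` is closed. -/
theorem distribution_support_eq_subsums
    (a : ℕ → ℝ) (ha : ∀ k, 0 < a k) (hsum : ∑' k, a k = 1)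
    (p₀ p₁ : ℕ → ℝ) (h₀ : ∀ k, 0 < p₀ k) (h₁ : ∀ k, 0 < p₁ k)
    (hp : ∀ k, p₀ k + p₁ k = 1)
    (P : Measure (ℕ → Bool))
    (hP : IsProductMeasure (fun k => bernoulliMeasure (p₀ k) (p₁ k)) P)
    (μφ : Measure ℝ)
    (hμφ : μφ = Measure.map (fun ω : ℕ → Bool => ∑' k : ℕ, if ω k then a k else 0) P)
    (S : Set ℝ)
    (hS : S = {x | ∃ γ : ℕ → Bool, x = ∑' k : ℕ, if γ k then a k else 0}) :
    IsClosed S ∧ μφ S = 1 ∧ ∀ F : Set ℝ, IsClosed F → μφ F = 1 → S ⊆ F :=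
  distribution_support_eq_subsums_general a ha hsum p₀ p₁ h₀ h₁ P hP μφ hμφ S hS
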